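/- For every integer s ≥ 2 and every rational ρ ≥ 1/(s−1), there exists a strictly balanced s-uniform hypergraph with density exactly ρ. -/

import Mathlib

open scoped Classical

/-- A finite `s`-uniform hypergraph on a vertex set of natural numbers. -/
structure SHypergraph (s : ℕ) where
  V : Finset ℕ
  E : Finset (Finset ℕ)
  card_edges : ∀ e ∈ E, e.card = s
  edges_sub : ∀ e ∈ E, e ⊆ V

namespace SHypergraph

/-- The density `|E|/|V|` of a hypergraph. -/
noncomputable def density {s : ℕ} (G : SHypergraph s) : ℚ :=
  (G.E.card : ℚ) / (G.V.card : ℚ)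

/-- `G` is strictly balanced: every proper subhypergraph with at least one
vertex has strictly smaller density. -/
def StrictlyBalanced {s : ℕ} (G : SHypergraph s) : Prop :=
  G.V.Nonempty ∧ ∀ H : SHypergraph s, H.V ⊆ G.V → H.E ⊆ G.E → H.V.Nonempty →
    ¬(H.V = G.V ∧ H.E = G.E) → H.density < G.density

/-- The subhypergraph of `G` induced on the vertex set `S`. -/
def restrict {s : ℕ} (G : SHypergraph s) (S : Finset ℕ) : SHypergraph s where
  V := G.V ∩ S
  E := G.E.filter (fun e => e ⊆ S)
  card_edges := fun e he => G.card_edges e (Finset.mem_filter.mp he).1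
  edges_sub := fun e he a ha => Finset.mem_inter.mpr
    ⟨G.edges_sub e (Finset.mem_filter.mp he).1 ha, (Finset.mem_filter.mp he).2 ha⟩

/-- A cycle `(v 0, e 0, v 1, e 1, …, v (m-1), e (m-1), v m = v 0)` in `G`. -/
def IsCycle {s : ℕ} (G : SHypergraph s) (m : ℕ) (v : ℕ → ℕ) (e : ℕ → Finset ℕ) : Prop :=
  0 < m ∧ v m = v 0 ∧ e m = e 0 ∧
  (∀ i < m, e i ∈ G.E) ∧ (∀ i < m, v i ∈ G.V) ∧
  (∀ i < m, v i ≠ v (i + 1)) ∧ (∀ i < m, e i ≠ e (i + 1)) ∧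
  (∀ i < m, v i ∈ e i ∧ v (i + 1) ∈ e i)

/-- `G` is connected: it is nonempty and any two vertices are joined by a
chain of edges. -/
def Connected {s : ℕ} (G : SHypergraph s) : Prop :=
  G.V.Nonempty ∧ ∀ u ∈ G.V, ∀ w ∈ G.V,
    Relation.ReflTransGen (fun a b => ∃ e ∈ G.E, a ∈ e ∧ b ∈ e) u w

/-- A tree is a connected hypergraph without cycles. -/
def IsTree {s : ℕ} (G : SHypergraph s) : Prop :=
  G.Connected ∧ ¬ ∃ m v e, G.IsCycle m v e

/-- For a rooted pair: number of nonroot vertices minus `α` times the number of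
edges with at least one nonroot vertex, for roots `S` in the hypergraph `K`. -/
noncomputable def exVal {s : ℕ} (α : ℝ) (S : Finset ℕ) (K : SHypergraph s) : ℝ :=
  ((K.V \ S).card : ℝ) - ((K.E.filter (fun f => ¬ f ⊆ S)).card : ℝ) * α

/-- The rooted hypergraph `(S, K)` is dense: `v - e·α < 0`. -/
noncomputable def IsDense {s : ℕ} (α : ℝ) (S : Finset ℕ) (K : SHypergraph s) : Prop :=
  exVal α S K < 0

/-- The rooted hypergraph `(S, K)` is sparse: `v - e·α > 0`. -/
noncomputable def IsSparse {s : ℕ} (α : ℝ) (S : Finset ℕ) (K : SHypergraph s) : Prop :=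
  0 < exVal α S K

/-- `(R, K)` is rigid: every nailextension `(S, K)` with `R ⊆ S ⊊ V(K)` is dense. -/
noncomputable def Rigid {s : ℕ} (α : ℝ) (R : Finset ℕ) (K : SHypergraph s) : Prop :=
  ∀ S : Finset ℕ, R ⊆ S → S ⊂ K.V → IsDense α S K

/-- `(R, K)` is safe: every subextension `(R, K|_S)` with `R ⊊ S ⊆ V(K)` is sparse. -/
noncomputable def Safe {s : ℕ} (α : ℝ) (R : Finset ℕ) (K : SHypergraph s) : Prop :=
  ∀ S : Finset ℕ, R ⊂ S → S ⊆ K.V → IsSparse α R (K.restrict S)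

/-- `(R, K)` is minimally safe: safe, with no safe nailextension. -/
noncomputable def MinimallySafe {s : ℕ} (α : ℝ) (R : Finset ℕ) (K : SHypergraph s) : Prop :=
  Safe α R K ∧ ¬ ∃ S : Finset ℕ, R ⊂ S ∧ S ⊂ K.V ∧ Safe α S K

/-- A rigid `t`-chain `x 0 ⊆ x 1 ⊆ … ⊆ x k` in `G`: each step adds at most `t`
vertices and each `(x i, G|_{x (i+1)})` is rigid. -/
noncomputable def IsRigidChain {s : ℕ} (α : ℝ) (G : SHypergraph s) (t k : ℕ)
    (x : ℕ → Finset ℕ) : Prop :=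
  (∀ i < k, x i ⊆ x (i + 1)) ∧ (∀ i < k, (x (i + 1) \ x i).card ≤ t) ∧
  (∀ i ≤ k, x i ⊆ G.V) ∧ (∀ i < k, Rigid α (x i) (G.restrict (x (i + 1))))

/-- `C` is the `t`-closure of `X` in `G`: it is the endpoint of a rigid
`t`-chain starting at `X` and contains the endpoint of every such chain. -/
noncomputable def IsTClosure {s : ℕ} (α : ℝ) (G : SHypergraph s) (t : ℕ)
    (X C : Finset ℕ) : Prop :=
  (∃ k x, IsRigidChain α G t k x ∧ x 0 = X ∧ x k = C) ∧
  ∀ k' x', IsRigidChain α G t k' x' → x' 0 = X → x' k' ⊆ C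

end SHypergraph

open SHypergraph

/-- The possible edges of an `s`-uniform hypergraph on `Fin n`. -/
def edgeCandidates (s n : ℕ) : Finset (Finset (Fin n)) :=
  Finset.univ.filter (fun e => e.card = s)

/-- The probability of the event `A` under the binomial random `s`-uniform
hypergraph `G^s(n,p)`: each of the `C(n,s)` possible edges appears
independently with probability `p`. -/
noncomputable def hyperProb (s n : ℕ) (p : ℝ) (A : Set (Finset (Finset (Fin n)))) : ℝ :=
  ∑ E ∈ (edgeCandidates s n).powerset,
    if E ∈ A then p ^ E.card * (1 - p) ^ ((edgeCandidates s n).card - E.card) else 0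

/-- The `s`-uniform hypergraph on vertex set `{0,…,n-1}` determined by an
edge set over `Fin n`. -/
noncomputable def ofEdges (s n : ℕ) (E : Finset (Finset (Fin n))) : SHypergraph s where
  V := Finset.range n
  E := (E.filter (fun e => e.card = s)).image (fun e => e.image Fin.val)
  card_edges := by
    intro f hf
    simp only [Finset.mem_image, Finset.mem_filter] at hf
    obtain ⟨e, ⟨_, hcard⟩, rfl⟩ := hf
    rw [Finset.card_image_of_injective _ Fin.val_injective]
    exact hcard
  edges_sub := by
    intro f hf a ha
    simp only [Finset.mem_image, Finset.mem_filter] at hf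
    obtain ⟨e, _, rfl⟩ := hf
    simp only [Finset.mem_image] at ha
    obtain ⟨b, _, rfl⟩ := ha
    exact Finset.mem_range.mpr b.isLt

/-!
Write `ρ = m / n` with `n ≤ (s - 1) m`, split `[0, m n)` into `n` vertex intervals of length `m`
and `m` edge intervals of length `n`, and weight each edge–vertex pair by the overlap of their
intervals. Every edge spreads weight `n` over its own vertices and every vertex receives weight
`m`, so double counting over a subhypergraph `H` gives `|E(H)| n ≤ m |V(H)|`. Equality would
make `V(H)` closed under the cyclic successor, because each vertex shares weight with an edge that
also contains the next vertex. The edges are short arithmetic progressions in `ℤ/n`: an edge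
whose interval crosses into later vertices is a run of consecutive vertices, while the edges lying
inside a single vertex interval are told apart by their common difference.
-/

open Finset

namespace SHypergraph

theorem strictlyBalanced_of_weighting {s : ℕ} (G : SHypergraph s) (w : Finset ℕ → ℕ → ℕ)
    (hV : G.V.Nonempty) (hsupp : ∀ e ∈ G.E, ∀ v, w e v ≠ 0 → v ∈ e)
    (hrow : ∀ e ∈ G.E, ∑ v ∈ G.V, w e v = #G.V)
    (hcol : ∀ v ∈ G.V, ∑ e ∈ G.E, w e v = #G.E)
    (hconn : ∀ U ⊆ G.V, U.Nonempty → U ≠ G.V → ∃ e ∈ G.E, ∃ v ∈ U, w e v ≠ 0 ∧ ¬e ⊆ U) :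
    G.StrictlyBalanced := by
  refine ⟨hV, fun H hHV hHE hH hproper => ?_⟩
  have key : #H.E * #G.V < #G.E * #H.V := by
    by_cases hU : H.V = G.V
    · have hE : H.E ⊂ G.E := ssubset_of_subset_of_ne hHE fun h => hproper ⟨hU, h⟩
      rw [hU]
      exact Nat.mul_lt_mul_of_pos_right (card_lt_card hE) hV.card_pos
    obtain ⟨e, he, v, hv, hwv, heU⟩ := hconn H.V hHV hH hU
    have hrowH : ∀ f ∈ H.E, ∑ u ∈ H.V, w f u = #G.V := fun f hf => by
      rw [← hrow f (hHE hf)]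
      refine sum_subset hHV fun u _ hu => ?_
      by_contra hwu
      exact hu (H.edges_sub f hf (hsupp f (hHE hf) u hwu))
    calc #H.E * #G.V = ∑ f ∈ H.E, ∑ u ∈ H.V, w f u := by
          rw [sum_congr rfl hrowH, sum_const, smul_eq_mul]
      _ < ∑ f ∈ G.E, ∑ u ∈ H.V, w f u := by
          refine sum_lt_sum_of_subset hHE he (fun heH => heU (H.edges_sub e heH)) ?_
            fun _ _ _ => Nat.zero_le _
          exact (Nat.pos_of_ne_zero hwv).trans_le (single_le_sum (fun _ _ => Nat.zero_le _) hv)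
      _ = #G.E * #H.V := by
          rw [sum_comm, sum_congr rfl fun u hu => hcol u (hHV hu), sum_const, smul_eq_mul,
            Nat.mul_comm]
  unfold density
  rw [div_lt_div_iff₀ (by exact_mod_cast hH.card_pos) (by exact_mod_cast hV.card_pos)]
  exact_mod_cast key

end SHypergraph

theorem Finset.eq_range_of_add_one_mod_mem {n : ℕ} {U : Finset ℕ} (hU : U ⊆ range n)
    (hne : U.Nonempty) (hsucc : ∀ j ∈ U, (j + 1) % n ∈ U) : U = range n := by
  obtain ⟨j₀, hj₀⟩ := hne
  have hj₀n : j₀ < n := mem_range.mp (hU hj₀)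
  have reach : ∀ t, (j₀ + t) % n ∈ U := by
    intro t
    induction t with
    | zero => simpa [Nat.mod_eq_of_lt hj₀n] using hj₀
    | succ t ih => simpa [Nat.add_mod_mod, Nat.add_assoc] using hsucc _ ih
  refine hU.antisymm fun j hj => ?_
  have hjn : j < n := mem_range.mp hj
  simpa [show j₀ + (n - j₀ + j) = j + n by omega, Nat.mod_eq_of_lt hjn] using reach (n - j₀ + j)

def modProgression (n a d k : ℕ) : Finset ℕ :=
  (range k).image fun t => (a + t * d) % n

section modProgression

variable {n a d k : ℕ}

theorem mem_modProgression {x : ℕ} :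
    x ∈ modProgression n a d k ↔ ∃ t < k, (a + t * d) % n = x := by
  simp [modProgression]

theorem modProgression_subset_range (hn : 0 < n) : modProgression n a d k ⊆ range n := by
  intro x hx
  obtain ⟨t, -, rfl⟩ := mem_modProgression.mp hx
  exact mem_range.mpr (Nat.mod_lt _ hn)

theorem card_modProgression (hd : 0 < d) (hk : (k - 1) * d < n) :
    #(modProgression n a d k) = k := by
  rw [modProgression, card_image_of_injOn, card_range]
  intro t ht t' ht' h
  simp only [coe_range, Set.mem_Iio] at ht ht'
  have hlt : ∀ u < k, u * d < n := fun u hu =>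
    (Nat.mul_le_mul_right d (by omega : u ≤ k - 1)).trans_lt hk
  have := (Nat.ModEq.add_left_cancel' a h).eq_of_lt_of_lt (hlt t ht) (hlt t' ht')
  exact Nat.eq_of_mul_eq_mul_right hd this

theorem modProgression_inj {a' d' : ℕ} (hk : 2 ≤ k) (ha : a < n) (ha' : a' < n) (hd : 0 < d)
    (hshort : 2 * ((k - 1) * d) < n) (hshort' : 2 * ((k - 1) * d') < n)
    (h : modProgression n a d k = modProgression n a' d' k) : a = a' ∧ d = d' := by
  have hle : ∀ {u} e, u < k → u * e ≤ (k - 1) * e := fun e hu =>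
    Nat.mul_le_mul_right e (by omega)
  obtain ⟨t, ht, hta⟩ : ∃ t < k, (a + t * d) % n = a' := by
    rw [← mem_modProgression, h, mem_modProgression]
    exact ⟨0, by omega, by simp [Nat.mod_eq_of_lt ha']⟩
  obtain ⟨t', ht', hta'⟩ : ∃ t' < k, (a' + t' * d') % n = a := by
    rw [← mem_modProgression, ← h, mem_modProgression]
    exact ⟨0, by omega, by simp [Nat.mod_eq_of_lt ha]⟩
  -- going from `a` to `a'` and back again takes less than one turn around the cycle
  have hloop : a + 0 ≡ a + (t * d + t' * d') [MOD n] := by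
    change (a + 0) % n = _
    rw [Nat.add_zero, Nat.mod_eq_of_lt ha, ← Nat.add_assoc, ← Nat.mod_add_mod (a + t * d), hta,
      hta']
  have hzero := (Nat.ModEq.add_left_cancel' a hloop).eq_of_lt_of_lt (by omega)
    (by have := hle d ht; have := hle d' ht'; omega)
  have haa' : a = a' := by
    rw [← hta, show t * d = 0 by omega, Nat.add_zero, Nat.mod_eq_of_lt ha]
  subst haa'
  obtain ⟨u, hu, hua⟩ : ∃ u < k, (a + u * d') % n = (a + d) % n := by
    rw [← mem_modProgression, ← h, mem_modProgression]
    exact ⟨1, by omega, by rw [Nat.one_mul]⟩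
  obtain ⟨u', hu', hua'⟩ : ∃ u' < k, (a + u' * d) % n = (a + d') % n := by
    rw [← mem_modProgression, h, mem_modProgression]
    exact ⟨1, by omega, by rw [Nat.one_mul]⟩
  have hd_le := hle d (by omega : 1 < k)
  have hd'_le := hle d' (by omega : 1 < k)
  have hdu : u * d' = d := (Nat.ModEq.add_left_cancel' a hua).eq_of_lt_of_lt
    (by have := hle d' hu; omega) (by omega)
  have hdu' : u' * d = d' := (Nat.ModEq.add_left_cancel' a hua').eq_of_lt_of_lt
    (by have := hle d hu'; omega) (by omega)
  have hu : 0 < u := Nat.pos_of_ne_zero fun h0 => by rw [h0, Nat.zero_mul] at hdu; omega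
  have hu' : 0 < u' := Nat.pos_of_ne_zero fun h0 => by
    rw [h0, Nat.zero_mul] at hdu'; rw [← hdu', Nat.mul_zero] at hdu; omega
  refine ⟨rfl, le_antisymm ?_ ?_⟩
  · exact hdu' ▸ Nat.le_mul_of_pos_left d hu'
  · exact hdu ▸ Nat.le_mul_of_pos_left d' hu

end modProgression

namespace Necklace

/-- The vertex whose interval `[j m, (j + 1) m)` contains the first point `i n` of the interval
of edge `i`. -/
def start (m n i : ℕ) : ℕ := i * n / m

/-- One more than the number of later edges whose interval also begins inside vertex
`start i`; it separates edges with a common start. -/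
def step (m n i : ℕ) : ℕ := ((start m n i + 1) * m - 1 - i * n) / n + 1

def edge (s m n i : ℕ) : Finset ℕ := modProgression n (start m n i) (step m n i) s

variable {s m n : ℕ}

theorem start_mul_le (i : ℕ) : start m n i * m ≤ i * n := Nat.div_mul_le_self _ _

theorem lt_start_add_one_mul (hm : 0 < m) (i : ℕ) : i * n < (start m n i + 1) * m := by
  rw [Nat.mul_comm _ m]
  exact Nat.lt_mul_div_succ _ hm

theorem start_lt (hn : 0 < n) {i : ℕ} (hi : i < m) : start m n i < n :=
  (Nat.div_lt_iff_lt_mul (by omega)).mpr <| by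
    rw [Nat.mul_comm n m]; exact Nat.mul_lt_mul_of_pos_right hi hn

theorem start_le_div {i x : ℕ} (hx : i * n ≤ x) : start m n i ≤ x / m :=
  Nat.div_le_div_right hx

theorem step_le (i : ℕ) : step m n i ≤ m / n + 1 := by
  have := start_mul_le (m := m) (n := n) i
  have : (start m n i + 1) * m - 1 - i * n ≤ m := by rw [Nat.add_one_mul]; omega
  exact Nat.add_le_add_right (Nat.div_le_div_right this) 1

theorem step_eq_one {i : ℕ} (h : (start m n i + 1) * m ≤ i * n + n) : step m n i = 1 := by
  rw [step, Nat.add_eq_right, Nat.div_eq_zero_iff]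
  omega

theorem step_lt_step (hm : 0 < m) (hn : 0 < n) {i i' : ℕ} (hii' : i < i')
    (hst : start m n i = start m n i') : step m n i' < step m n i := by
  have h₁ := lt_start_add_one_mul (n := n) hm i'
  have h₂ : i * n + n ≤ i' * n := by rw [← Nat.add_one_mul]; exact Nat.mul_le_mul_right n hii'
  rw [step, step, ← hst, Nat.add_lt_add_iff_right, ← Nat.add_one_le_iff,
    ← Nat.add_div_right _ hn]
  exact Nat.div_le_div_right (by rw [← hst] at h₁; omega)

theorem two_mul_step_lt (hshort : 2 * ((s - 1) * (m / n + 1)) < n) (i : ℕ) :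
    2 * ((s - 1) * step m n i) < n :=
  lt_of_le_of_lt (Nat.mul_le_mul_left 2 (Nat.mul_le_mul_left _ (step_le i))) hshort

theorem card_edge (hshort : 2 * ((s - 1) * (m / n + 1)) < n) (i : ℕ) : #(edge s m n i) = s :=
  card_modProgression (Nat.succ_pos _) (by have := two_mul_step_lt hshort i; omega)

theorem edge_injOn (hs : 2 ≤ s) (hm : 0 < m) (hshort : 2 * ((s - 1) * (m / n + 1)) < n) :
    Set.InjOn (edge s m n) (range m) := by
  have hn : 0 < n := by omega
  intro i hi i' hi' h
  simp only [coe_range, Set.mem_Iio] at hi hi'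
  obtain ⟨hst, hstep⟩ := modProgression_inj hs (start_lt hn hi) (start_lt hn hi')
    (Nat.succ_pos _) (two_mul_step_lt hshort i) (two_mul_step_lt hshort i') h
  rcases lt_trichotomy i i' with hlt | heq | hgt
  · exact absurd hstep (step_lt_step hm hn hlt hst).ne'
  · exact heq
  · exact absurd hstep (step_lt_step hm hn hgt hst.symm).ne

/-- Edge `i` contains every vertex from `start i` up to the first one past its interval. -/
theorem mod_mem_edge (hm : 0 < m) (hn : 0 < n) (hnm : n ≤ (s - 1) * m) {i j : ℕ}
    (hst : start m n i ≤ j) (hj : j * m ≤ i * n + n) : j % n ∈ edge s m n i := by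
  have h₁ := lt_start_add_one_mul (n := n) hm i
  have hs : 0 < s - 1 := Nat.pos_of_ne_zero fun h => by rw [h, Nat.zero_mul] at hnm; omega
  rw [edge, mem_modProgression]
  rcases hst.eq_or_lt with rfl | hlt
  · exact ⟨0, by omega, by rw [Nat.zero_mul, Nat.add_zero]⟩
  have hstep : step m n i = 1 :=
    step_eq_one ((Nat.mul_le_mul_right m hlt).trans hj)
  have hjs : j < start m n i + s := by
    by_contra! hjs
    have := Nat.mul_le_mul_right m hjs
    have hsm : s * m = (s - 1) * m + m := by rw [← Nat.add_one_mul, Nat.sub_add_cancel (by omega)]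
    rw [Nat.add_one_mul] at h₁
    rw [Nat.add_mul, hsm] at this
    omega
  exact ⟨j - start m n i, by omega, by rw [hstep, Nat.mul_one, Nat.add_sub_cancel' hst]⟩

theorem div_mem_edge (hm : 0 < m) (hnm : n ≤ (s - 1) * m) {x : ℕ} (hx : x < m * n) :
    x / m ∈ edge s m n (x / n) := by
  have hn : 0 < n := Nat.pos_of_mul_pos_left (by omega : 0 < m * n)
  have hxn : x / m < n := Nat.div_lt_of_lt_mul hx
  have := Nat.div_mul_le_self x m
  have := Nat.lt_div_mul_add (a := x) hn
  simpa [Nat.mod_eq_of_lt hxn] using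
    mod_mem_edge hm hn hnm (start_le_div (Nat.div_mul_le_self x n)) (by omega)

theorem add_one_mod_mem_edge (hm : 0 < m) (hn : 0 < n) (hnm : n ≤ (s - 1) * m) {j : ℕ} :
    (j + 1) % n ∈ edge s m n (((j + 1) * m - 1) / n) := by
  have hpos : 0 < (j + 1) * m := Nat.mul_pos j.succ_pos hm
  have hx : ((j + 1) * m - 1) / m = j := by
    rw [Nat.div_eq_iff hm]; rw [Nat.add_one_mul] at hpos ⊢; omega
  have := Nat.lt_div_mul_add (a := (j + 1) * m - 1) hn
  refine mod_mem_edge hm hn hnm ?_ (by omega)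
  exact hx ▸ start_le_div (Nat.div_mul_le_self _ n) |>.trans (Nat.le_succ j)

theorem card_filter_div_eq (hn : 0 < n) {i : ℕ} (hi : i < m) :
    #{x ∈ range (m * n) | x / n = i} = n := by
  have hin : i * n + n ≤ m * n := by rw [← Nat.add_one_mul]; exact Nat.mul_le_mul_right n hi
  have : {x ∈ range (m * n) | x / n = i} = Ico (i * n) (i * n + n) := by
    ext x
    simp only [mem_filter, mem_range, mem_Ico, Nat.div_eq_iff hn]
    omega
  rw [this, Nat.card_Ico, Nat.add_sub_cancel_left]

theorem add_one_mul_sub_one_div (hm : 0 < m) (j : ℕ) : ((j + 1) * m - 1) / m = j := by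
  rw [Nat.div_eq_iff hm, Nat.add_one_mul]
  omega

/-- The number of points of `range (m * n)` shared by the intervals of edge `e` and vertex `j`. -/
def weight (s m n : ℕ) (e : Finset ℕ) (j : ℕ) : ℕ :=
  #{x ∈ range (m * n) | edge s m n (x / n) = e ∧ x / m = j}

theorem sum_weight_vertices (hs : 2 ≤ s) (hm : 0 < m)
    (hshort : 2 * ((s - 1) * (m / n + 1)) < n) {i : ℕ} (hi : i < m) :
    ∑ j ∈ range n, weight s m n (edge s m n i) j = n := by
  have hn : 0 < n := by omega
  have hedge : {x ∈ range (m * n) | edge s m n (x / n) = edge s m n i} =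
      {x ∈ range (m * n) | x / n = i} :=
    filter_congr fun x hx => (edge_injOn hs hm hshort).eq_iff
      (mem_coe.mpr (mem_range.mpr (Nat.div_lt_of_lt_mul (Nat.mul_comm m n ▸ mem_range.mp hx))))
      (mem_coe.mpr (mem_range.mpr hi))
  calc ∑ j ∈ range n, weight s m n (edge s m n i) j
      = #{x ∈ range (m * n) | edge s m n (x / n) = edge s m n i} := by
        rw [card_eq_sum_card_fiberwise (f := (· / m)) (t := range n)]
        · simp only [weight, filter_filter]
        · intro x hx
          exact mem_range.mpr (Nat.div_lt_of_lt_mul (mem_range.mp (mem_filter.mp hx).1))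
    _ = n := by rw [hedge, card_filter_div_eq hn hi]

theorem sum_weight_edges (hm : 0 < m) {j : ℕ} (hj : j < n) :
    ∑ e ∈ (range m).image (edge s m n), weight s m n e j = m := by
  have hcol := card_filter_div_eq (m := n) hm hj
  rw [Nat.mul_comm] at hcol
  rw [card_eq_sum_card_fiberwise (f := fun x => edge s m n (x / n))
    (t := (range m).image (edge s m n))] at hcol
  · simpa only [weight, filter_filter, and_comm] using hcol
  · intro x hx
    exact mem_image_of_mem _ (mem_range.mpr
      (Nat.div_lt_of_lt_mul (Nat.mul_comm m n ▸ mem_range.mp (mem_filter.mp hx).1)))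

def hypergraph (s m n : ℕ) (hshort : 2 * ((s - 1) * (m / n + 1)) < n) : SHypergraph s where
  V := range n
  E := (range m).image (edge s m n)
  card_edges := by
    simp only [mem_image]
    rintro _ ⟨i, -, rfl⟩
    exact card_edge hshort i
  edges_sub := by
    simp only [mem_image]
    rintro _ ⟨i, -, rfl⟩
    exact modProgression_subset_range (by omega)

theorem card_hypergraph_E (hs : 2 ≤ s) (hm : 0 < m)
    (hshort : 2 * ((s - 1) * (m / n + 1)) < n) : #(hypergraph s m n hshort).E = m := by
  rw [hypergraph, card_image_of_injOn (edge_injOn hs hm hshort), card_range]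

theorem hypergraph_strictlyBalanced (hs : 2 ≤ s) (hm : 0 < m) (hnm : n ≤ (s - 1) * m)
    (hshort : 2 * ((s - 1) * (m / n + 1)) < n) : (hypergraph s m n hshort).StrictlyBalanced := by
  have hn : 0 < n := by omega
  refine strictlyBalanced_of_weighting _ (weight s m n) ⟨0, mem_range.mpr hn⟩ ?_ ?_ ?_ ?_
  · rintro e - j hj
    obtain ⟨x, hx, rfl, rfl⟩ := (filter_nonempty_iff.mp (card_ne_zero.mp hj))
    exact div_mem_edge hm hnm (mem_range.mp hx)
  · rintro _ he
    obtain ⟨i, hi, rfl⟩ := mem_image.mp he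
    rw [hypergraph, card_range]
    exact sum_weight_vertices hs hm hshort (mem_range.mp hi)
  · intro j hj
    rw [card_hypergraph_E hs hm hshort]
    exact sum_weight_edges hm (mem_range.mp hj)
  · intro U hU hne hUV
    obtain ⟨j, hj, hj'⟩ : ∃ j ∈ U, (j + 1) % n ∉ U := by
      by_contra! h
      exact hUV (eq_range_of_add_one_mod_mem hU hne h)
    have hjn : j < n := mem_range.mp (hU hj)
    have hx : (j + 1) * m - 1 < m * n := by
      have := Nat.mul_le_mul_right m (show j + 1 ≤ n by omega)
      have := Nat.mul_pos hn hm
      rw [Nat.mul_comm m n]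
      omega
    have hi : ((j + 1) * m - 1) / n < m := Nat.div_lt_of_lt_mul (by rwa [Nat.mul_comm n m])
    refine ⟨_, mem_image_of_mem _ (mem_range.mpr hi), j, hj, ?_,
      fun h => hj' (h (add_one_mod_mem_edge hm hn hnm))⟩
    exact card_ne_zero.mpr (filter_nonempty_iff.mpr
      ⟨_, mem_range.mpr hx, rfl, add_one_mul_sub_one_div hm j⟩)

theorem hypergraph_density (hs : 2 ≤ s) (hm : 0 < m)
    (hshort : 2 * ((s - 1) * (m / n + 1)) < n) :
    (hypergraph s m n hshort).density = m / n := by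
  rw [density, card_hypergraph_E hs hm hshort]
  simp [hypergraph]

end Necklace

theorem exists_strictlyBalanced_density {s a b : ℕ} (hs : 2 ≤ s) (ha : 0 < a) (hb : 0 < b)
    (hba : b ≤ (s - 1) * a) :
    ∃ G : SHypergraph s, G.StrictlyBalanced ∧ G.density = a / b := by
  -- scaling `a / b` to `(a k) / (b k)` makes every edge short compared to the cycle
  obtain ⟨k, hk⟩ : ∃ k, 2 * ((s - 1) * (a + 1)) < k := ⟨_, Nat.lt_succ_self _⟩
  have hk₀ : 0 < k := by omega
  have hshort : 2 * ((s - 1) * (a * k / (b * k) + 1)) < b * k := by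
    rw [Nat.mul_div_mul_right a b hk₀]
    calc 2 * ((s - 1) * (a / b + 1)) ≤ 2 * ((s - 1) * (a + 1)) := by
          gcongr; exact Nat.div_le_self a b
      _ < k := hk
      _ ≤ b * k := Nat.le_mul_of_pos_left k hb
  refine ⟨Necklace.hypergraph s (a * k) (b * k) hshort,
    Necklace.hypergraph_strictlyBalanced hs (Nat.mul_pos ha hk₀) ?_ hshort, ?_⟩
  · rw [← Nat.mul_assoc]
    exact Nat.mul_le_mul_right k hba
  · rw [Necklace.hypergraph_density hs (Nat.mul_pos ha hk₀) hshort, Nat.cast_mul, Nat.cast_mul,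
      mul_div_mul_right _ _ (by positivity)]

/-- For every integer `s ≥ 2` and every rational `ρ ≥ 1/(s-1)`,
there exists a strictly balanced `s`-uniform hypergraph with density `ρ`. -/
theorem stmt1 (s : ℕ) (hs : 2 ≤ s) (ρ : ℚ) (hρ : 1 / ((s : ℚ) - 1) ≤ ρ) :
    ∃ G : SHypergraph s, G.StrictlyBalanced ∧ G.density = ρ := by
  have hs₁ : (0 : ℚ) < (s - 1 : ℕ) := by exact_mod_cast (by omega : 0 < s - 1)
  rw [← Nat.cast_one, ← Nat.cast_sub (by omega), Nat.cast_one] at hρ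
  have hρ₀ : 0 < ρ := (one_div_pos.mpr hs₁).trans_le hρ
  obtain ⟨a, ha⟩ := Int.eq_ofNat_of_zero_le (Rat.num_nonneg.mpr hρ₀.le)
  have ha₀ : 0 < a := by have := Rat.num_pos.mpr hρ₀; omega
  have hρab : ρ = a / ρ.den := (Rat.num_div_den ρ).symm.trans (by rw [ha, Int.cast_natCast])
  have hb₀ := ρ.pos
  generalize ρ.den = b at hρab hb₀
  subst hρab
  rw [div_le_div_iff₀ hs₁ (by positivity), one_mul] at hρ
  exact exists_strictlyBalanced_density hs ha₀ hb₀ (by rw [Nat.mul_comm]; exact_mod_cast hρ)
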